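/- arXiv:1409.1472 — 2 statements merged into one kernel-verified Lean document; each statement's English description precedes it below -/
import Mathlib

section
/- Let ζ be an irrational real number with λ_1(ζ) < ∞, and set k_0 = ⌈(λ_1(ζ)+1)/2⌉. Then λ_k(ζ) = (λ_1(ζ) − k + 1)/k for all integers k with 1 ≤ k ≤ k_0 − 1, and max{(λ_1(ζ) − k + 1)/k, 1/k} ≤ λ_k(ζ) ≤ 1 for all integers k ≥ k_0. -/
/-- Distance from a real number to the nearest integer. -/
noncomputable def distNearestInt (a : ℝ) : ℝ := |a - round a|

/-- `max_{1 ≤ j ≤ k} ‖ζ^j x‖` for a positive integer `x`. -/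
noncomputable def maxDist (k : ℕ) (ζ : ℝ) (x : ℕ) : ℝ :=
  ⨆ j ∈ Finset.Icc 1 k, distNearestInt (ζ ^ j * x)

/-- The approximation constant `λ_k(ζ)`, as an extended real number in `[0,∞]`. -/
noncomputable def lambdaConst (k : ℕ) (ζ : ℝ) : EReal :=
  sSup (insert (0 : EReal) {e : EReal | ∃ η : ℝ, e = (η : EReal) ∧
    {x : ℕ | 0 < x ∧ 0 < maxDist k ζ x ∧ maxDist k ζ x ≤ (x : ℝ) ^ (-η)}.Infinite})

/-- The uniform approximation constant `λ̂_k(ζ)`, as an extended real number in `[0,∞]`. -/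
noncomputable def lambdaHatConst (k : ℕ) (ζ : ℝ) : EReal :=
  sSup (insert (0 : EReal) {e : EReal | ∃ η : ℝ, e = (η : EReal) ∧
    ∃ X₀ : ℝ, ∀ X : ℝ, X₀ ≤ X → ∃ x : ℕ, 1 ≤ x ∧ (x : ℝ) ≤ X ∧
      0 < maxDist k ζ x ∧ maxDist k ζ x ≤ X ^ (-η)})

/-- The dual approximation constant `w_k(ζ)`, as an extended real number in `[0,∞]`. -/
noncomputable def wConst (k : ℕ) (ζ : ℝ) : EReal :=
  sSup (insert (0 : EReal) {e : EReal | ∃ ν : ℝ, e = (ν : EReal) ∧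
    ∀ X₀ : ℝ, ∃ X : ℝ, X₀ ≤ X ∧ ∃ p : Fin (k + 1) → ℤ,
      (∀ j, |(p j : ℝ)| ≤ X) ∧
      0 < |∑ j : Fin (k + 1), ζ ^ (j : ℕ) * (p j : ℝ)| ∧
      |∑ j : Fin (k + 1), ζ ^ (j : ℕ) * (p j : ℝ)| ≤ X ^ (-ν)})

/-- The uniform dual approximation constant `ŵ_k(ζ)`, as an extended real number in `[0,∞]`. -/
noncomputable def wHatConst (k : ℕ) (ζ : ℝ) : EReal :=
  sSup (insert (0 : EReal) {e : EReal | ∃ ν : ℝ, e = (ν : EReal) ∧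
    ∃ X₀ : ℝ, ∀ X : ℝ, X₀ ≤ X → ∃ p : Fin (k + 1) → ℤ,
      (∀ j, |(p j : ℝ)| ≤ X) ∧
      0 < |∑ j : Fin (k + 1), ζ ^ (j : ℕ) * (p j : ℝ)| ∧
      |∑ j : Fin (k + 1), ζ ^ (j : ℕ) * (p j : ℝ)| ≤ X ^ (-ν)})


/-!
The lower bound `(λ_1 - k + 1)/k` comes from powers: if `‖ζ q‖ ≤ q^{-w}` and `p` is the integer
nearest to `ζ q`, each `ζ^j q^k` lies within `≪ q^{k-1} ‖ζ q‖` of the integer `p^j q^{k-j}`, so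
`x = q^k` has `max_j ‖ζ^j x‖ ≪ x^{-(w-k+1)/k}`. The lower bound `1/k` is simultaneous Dirichlet
approximation.

The upper bound is a rigidity statement. If `max_{j ≤ k} ‖ζ^j x‖ ≤ x^{-η}` with `η > 1` and
`p_j` is the integer nearest to `ζ^j x`, then `p_1 p_j - p_{j+1} x` is an integer of size
`≪ x^{1-η} < 1`, hence zero, so `p_1^k = p_k x^{k-1}`. Writing `p_1 / x = a / b` in lowest terms
this forces `b^{k-1} ∣ x / b`, i.e. `b^k ≤ x`, and then `‖ζ b‖ ≤ (b / x) x^{-η} ≤ b^{-(kη+k-1)}`.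
Hence `λ_k(ζ) ≤ max(1, (λ_1(ζ) - k + 1)/k)`, and `(λ_1(ζ) - k + 1)/k > 1` exactly when
`k < (λ_1(ζ) + 1)/2`.
-/
open Filter Topology

section NearestInteger

lemma distNearestInt_nonneg (a : ℝ) : 0 ≤ distNearestInt a := abs_nonneg _

lemma distNearestInt_le_abs_sub (a : ℝ) (m : ℤ) : distNearestInt a ≤ |a - m| := round_le a m

lemma distNearestInt_pos_of_irrational {a : ℝ} (ha : Irrational a) : 0 < distNearestInt a :=
  abs_pos.2 (sub_ne_zero.2 (ha.ne_int _))

lemma exists_pos_le_distNearestInt {ζ : ℝ} (hζ : Irrational ζ) (N : ℕ) :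
    ∃ ε > 0, ∀ x : ℕ, 0 < x → x ≤ N → ε ≤ distNearestInt (ζ * x) := by
  rcases (Finset.Icc 1 N).eq_empty_or_nonempty with hN | hN
  · refine ⟨1, one_pos, fun x hx hxN => ?_⟩
    simp only [Finset.Icc_eq_empty_iff] at hN
    omega
  · obtain ⟨y, hy, hmin⟩ := (Finset.Icc 1 N).exists_min_image (fun x => distNearestInt (ζ * x)) hN
    have hy0 : y ≠ 0 := Nat.one_le_iff_ne_zero.1 (Finset.mem_Icc.1 hy).1
    exact ⟨_, distNearestInt_pos_of_irrational (hζ.mul_natCast hy0),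
      fun x hx hxN => hmin x (Finset.mem_Icc.2 ⟨hx, hxN⟩)⟩

lemma infinite_of_forall_exists_distNearestInt_lt {ζ : ℝ} {S : Set ℕ} (hζ : Irrational ζ)
    (h : ∀ ε > 0, ∃ x ∈ S, 0 < x ∧ distNearestInt (ζ * x) < ε) : S.Infinite := by
  refine Set.infinite_of_forall_exists_gt fun N => ?_
  obtain ⟨ε, hε, hN⟩ := exists_pos_le_distNearestInt hζ N
  obtain ⟨x, hxS, hx, hxε⟩ := h ε hε
  exact ⟨x, hxS, not_le.1 fun hxN => (hN x hx hxN).not_gt hxε⟩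

end NearestInteger

section MaxDist

lemma bddAbove_range_maxDist (k : ℕ) (ζ : ℝ) (x : ℕ) :
    BddAbove (Set.range fun j => ⨆ _ : j ∈ Finset.Icc 1 k, distNearestInt (ζ ^ j * x)) := by
  refine ⟨1 / 2, ?_⟩
  rintro _ ⟨j, rfl⟩
  dsimp only
  by_cases hj : j ∈ Finset.Icc 1 k
  · rw [ciSup_pos hj]
    exact abs_sub_round _
  · simp only [hj, Real.iSup_of_isEmpty]
    norm_num

lemma le_maxDist {k j : ℕ} (hj : 1 ≤ j) (hjk : j ≤ k) (ζ : ℝ) (x : ℕ) :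
    distNearestInt (ζ ^ j * x) ≤ maxDist k ζ x := by
  have hmem : j ∈ Finset.Icc 1 k := Finset.mem_Icc.2 ⟨hj, hjk⟩
  unfold maxDist
  simpa only [ciSup_pos hmem] using le_ciSup (bddAbove_range_maxDist k ζ x) j

lemma maxDist_le {k : ℕ} {ζ : ℝ} {x : ℕ} {c : ℝ} (hc : 0 ≤ c)
    (h : ∀ j, 1 ≤ j → j ≤ k → distNearestInt (ζ ^ j * x) ≤ c) : maxDist k ζ x ≤ c :=
  Real.iSup_le (fun j => Real.iSup_le (fun hj => h j (Finset.mem_Icc.1 hj).1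
    (Finset.mem_Icc.1 hj).2) hc) hc

lemma maxDist_one (ζ : ℝ) (x : ℕ) : maxDist 1 ζ x = distNearestInt (ζ * x) := by
  refine le_antisymm (maxDist_le (distNearestInt_nonneg _) fun j hj hj1 => ?_) ?_
  · obtain rfl : j = 1 := by omega
    rw [pow_one]
  · simpa only [pow_one] using le_maxDist le_rfl le_rfl ζ (k := 1) x

lemma distNearestInt_le_maxDist {k : ℕ} (hk : 1 ≤ k) (ζ : ℝ) (x : ℕ) :
    distNearestInt (ζ * x) ≤ maxDist k ζ x := by
  simpa only [pow_one] using le_maxDist le_rfl hk ζ x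

lemma maxDist_pos {k : ℕ} (hk : 1 ≤ k) {ζ : ℝ} (hζ : Irrational ζ) {x : ℕ} (hx : 0 < x) :
    0 < maxDist k ζ x :=
  (distNearestInt_pos_of_irrational (hζ.mul_natCast hx.ne')).trans_le
    (distNearestInt_le_maxDist hk ζ x)

end MaxDist

section ApproxSet

variable {k : ℕ} {ζ : ℝ}

def approxSet (k : ℕ) (ζ η : ℝ) : Set ℕ :=
  {x | 0 < x ∧ 0 < maxDist k ζ x ∧ maxDist k ζ x ≤ (x : ℝ) ^ (-η)}

lemma mem_approxSet_one {η : ℝ} {x : ℕ} :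
    x ∈ approxSet 1 ζ η ↔
      0 < x ∧ 0 < distNearestInt (ζ * x) ∧ distNearestInt (ζ * x) ≤ (x : ℝ) ^ (-η) := by
  show _ ∧ _ ∧ _ ↔ _
  rw [maxDist_one]

lemma approxSet_antitone (k : ℕ) (ζ : ℝ) : Antitone (approxSet k ζ) :=
  fun _ _ hηη' _ ⟨hx, hpos, hle⟩ => ⟨hx, hpos, hle.trans
    (Real.rpow_le_rpow_of_exponent_le (by exact_mod_cast hx) (neg_le_neg hηη'))⟩

lemma lambdaConst_nonneg (k : ℕ) (ζ : ℝ) : 0 ≤ lambdaConst k ζ :=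
  le_sSup (Set.mem_insert _ _)

lemma coe_le_lambdaConst {η : ℝ} (h : (approxSet k ζ η).Infinite) :
    (η : EReal) ≤ lambdaConst k ζ :=
  le_sSup (Set.mem_insert_of_mem _ ⟨η, rfl, h⟩)

lemma lambdaConst_le {c : EReal} (hc : 0 ≤ c)
    (h : ∀ η : ℝ, (approxSet k ζ η).Infinite → (η : EReal) ≤ c) : lambdaConst k ζ ≤ c := by
  refine sSup_le ?_
  rintro e (rfl | ⟨η, rfl, hη⟩)
  exacts [hc, h η hη]

lemma coe_le_lambdaConst_of_forall_lt {r : ℝ}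
    (h : ∀ η : ℝ, 0 < η → η < r → (approxSet k ζ η).Infinite) : (r : EReal) ≤ lambdaConst k ζ := by
  refine EReal.ge_of_forall_gt_iff_ge.1 fun η hη => ?_
  rcases le_or_gt η 0 with hη0 | hη0
  · exact (EReal.coe_le_coe_iff.2 hη0).trans (lambdaConst_nonneg k ζ)
  · exact coe_le_lambdaConst (h η hη0 (EReal.coe_lt_coe_iff.1 hη))

lemma infinite_approxSet_of_coe_lt_lambdaConst {η : ℝ} (hη : 0 ≤ η)
    (h : (η : EReal) < lambdaConst k ζ) : (approxSet k ζ η).Infinite := by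
  obtain ⟨e, he, hηe⟩ := lt_sSup_iff.1 h
  rcases he with rfl | ⟨η', rfl, hη'⟩
  · exact absurd hηe (not_lt.2 (EReal.coe_nonneg.2 hη))
  · exact hη'.mono (approxSet_antitone k ζ (EReal.coe_lt_coe_iff.1 hηe).le)

end ApproxSet

section Dirichlet

/- Dirichlet's theorem in the compact group `(ℝ/ℤ)^k`, whose balls of radius `1/(2Q)` have
volume `Q^{-k}`. -/
open MeasureTheory in
lemma exists_maxDist_le_inv (ζ : ℝ) (k : ℕ) {Q : ℕ} (hQ : 1 ≤ Q) :
    ∃ x : ℕ, 1 ≤ x ∧ x ≤ Q ^ k ∧ maxDist k ζ x ≤ 1 / Q := by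
  have hQ' : (0 : ℝ) < Q := by exact_mod_cast hQ
  have hvol : (volume : Measure (Fin k → UnitAddCircle)) Set.univ ≤
      (Q ^ k + 1) • volume (Metric.closedBall (0 : Fin k → UnitAddCircle) (1 / Q / 2)) := by
    have hmin : min 1 (2 * (1 / (Q : ℝ) / 2)) = (Q : ℝ)⁻¹ := by
      rw [min_eq_right] <;> field_simp
      exact_mod_cast hQ
    rw [volume_pi, Measure.pi_closedBall _ _ (by positivity), Measure.pi_univ]
    simp only [AddCircle.measure_univ, AddCircle.volume_closedBall, hmin, ENNReal.ofReal_one,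
      Finset.prod_const_one, Finset.prod_const, Finset.card_univ, Fintype.card_fin,
      ENNReal.ofReal_inv_of_pos hQ', ENNReal.ofReal_natCast, nsmul_eq_mul, ← ENNReal.inv_pow]
    calc (1 : ENNReal) = (Q ^ k : ENNReal) * ((Q : ENNReal) ^ k)⁻¹ :=
          (ENNReal.mul_inv_cancel (by simp; omega) (by simp)).symm
      _ ≤ _ := by push_cast; gcongr; exact le_self_add
  obtain ⟨x, ⟨hx1, hxQ⟩, hxξ⟩ := NormedAddCommGroup.exists_norm_nsmul_le
    (fun i : Fin k => ((ζ ^ (i + 1 : ℕ) : ℝ) : UnitAddCircle)) (by positivity) _ hvol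
  refine ⟨x, hx1, hxQ, maxDist_le (by positivity) fun j hj hjk => ?_⟩
  obtain ⟨i, rfl⟩ : ∃ i : Fin k, j = i + 1 := ⟨⟨j - 1, by omega⟩, by simp; omega⟩
  simpa [distNearestInt, ← UnitAddCircle.norm_eq, mul_comm] using
    (norm_le_pi_norm _ i).trans hxξ

lemma infinite_approxSet_one_div {k : ℕ} {ζ : ℝ} (hζ : Irrational ζ) (hk : 1 ≤ k) :
    (approxSet k ζ (1 / k)).Infinite := by
  refine infinite_of_forall_exists_distNearestInt_lt hζ fun ε hε => ?_
  obtain ⟨Q, hQ⟩ := exists_nat_gt (1 / ε)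
  have hQ0 : (0 : ℝ) < Q := (one_div_pos.2 hε).trans hQ
  obtain ⟨x, hx, hxQ, hxd⟩ := exists_maxDist_le_inv ζ k (Nat.cast_pos.1 hQ0)
  have hxk : (x : ℝ) ^ (1 / k : ℝ) ≤ Q := by
    calc (x : ℝ) ^ (1 / k : ℝ) ≤ ((Q : ℝ) ^ k) ^ (1 / k : ℝ) := by
          gcongr; exact_mod_cast hxQ
      _ = Q := by rw [one_div, Real.pow_rpow_inv_natCast hQ0.le (by omega)]
  refine ⟨x, ⟨hx, maxDist_pos hk hζ hx, hxd.trans ?_⟩, hx, ?_⟩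
  · rw [Real.rpow_neg (Nat.cast_nonneg _), ← one_div]
    exact one_div_le_one_div_of_le (by positivity) hxk
  · exact (distNearestInt_le_maxDist hk ζ x).trans_lt (hxd.trans_lt ((one_div_lt hε hQ0).1 hQ))

end Dirichlet

section Powers

lemma distNearestInt_pow_mul_pow_le (ζ : ℝ) {j k q : ℕ} (hj : 1 ≤ j) (hjk : j ≤ k) (hq : 0 < q) :
    distNearestInt (ζ ^ j * (q ^ k : ℕ)) ≤
      k * (|ζ| + 1) ^ (k - 1) * (q : ℝ) ^ (k - 1) * distNearestInt (ζ * q) := by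
  set p := round (ζ * q)
  set C := |ζ| + 1
  have hq1 : (1 : ℝ) ≤ q := by exact_mod_cast hq
  have hζq : |ζ * q| ≤ C * q := by
    rw [abs_mul, Nat.abs_cast]; gcongr; linarith
  have hp : |(p : ℝ)| ≤ C * q := by
    have := abs_sub_round (ζ * q)
    have := abs_sub_abs_le_abs_sub (p : ℝ) (ζ * q)
    rw [abs_sub_comm] at this
    rw [abs_mul, Nat.abs_cast] at *
    linarith
  have hsplit : ζ ^ j * ((q ^ k : ℕ) : ℝ) - ((p ^ j * q ^ (k - j) : ℤ) : ℝ) =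
      ((ζ * q) ^ j - (p : ℝ) ^ j) * (q : ℝ) ^ (k - j) := by
    push_cast
    rw [← Nat.add_sub_cancel' hjk, pow_add, Nat.add_sub_cancel_left]
    ring
  calc distNearestInt (ζ ^ j * (q ^ k : ℕ))
      ≤ |(ζ * q) ^ j - (p : ℝ) ^ j| * (q : ℝ) ^ (k - j) := by
        refine (distNearestInt_le_abs_sub _ (p ^ j * q ^ (k - j))).trans_eq ?_
        rw [hsplit, abs_mul, abs_of_nonneg (pow_nonneg (Nat.cast_nonneg (α := ℝ) q) (k - j))]
    _ ≤ distNearestInt (ζ * q) * j * (C * q) ^ (j - 1) * (q : ℝ) ^ (k - j) := by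
        refine mul_le_mul_of_nonneg_right ((abs_pow_sub_pow_le _ _ _).trans ?_) (by positivity)
        exact mul_le_mul_of_nonneg_left (pow_le_pow_left₀ (by positivity) (max_le hζq hp) _)
          (mul_nonneg (distNearestInt_nonneg _) (Nat.cast_nonneg j))
    _ = j * C ^ (j - 1) * (q : ℝ) ^ (k - 1) * distNearestInt (ζ * q) := by
        rw [mul_pow, ← Nat.sub_add_sub_cancel hjk hj]
        ring
    _ ≤ k * C ^ (k - 1) * (q : ℝ) ^ (k - 1) * distNearestInt (ζ * q) := by
        have hC : 1 ≤ C := by simp [C]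
        gcongr
        exact distNearestInt_nonneg _

lemma infinite_approxSet_pow {k : ℕ} {ζ η w : ℝ} (hζ : Irrational ζ) (hk : 1 ≤ k)
    (hw : k * η + k - 1 < w) (h : (approxSet 1 ζ w).Infinite) : (approxSet k ζ η).Infinite := by
  set K := k * (|ζ| + 1) ^ (k - 1)
  set e := w - (k * η + k - 1)
  have hev : ∀ᶠ q : ℕ in atTop, 0 < q ∧ K ≤ (q : ℝ) ^ e :=
    (eventually_gt_atTop 0).and
      (((tendsto_rpow_atTop (by simp only [e]; linarith)).comp
        tendsto_natCast_atTop_atTop).eventually_ge_atTop K)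
  have hpow : ∃ᶠ q : ℕ in atTop, q ^ k ∈ approxSet k ζ η := by
    refine ((Nat.frequently_atTop_iff_infinite.2 h).and_eventually hev).mono ?_
    rintro q ⟨hq, hq0, hqK⟩
    obtain ⟨-, -, hqw⟩ := mem_approxSet_one.1 hq
    have hq' : (0 : ℝ) < q := by exact_mod_cast hq0
    refine ⟨pow_pos hq0 k, maxDist_pos hk hζ (pow_pos hq0 k), maxDist_le (by positivity)
      fun j hj hjk => (distNearestInt_pow_mul_pow_le ζ hj hjk hq0).trans ?_⟩
    calc K * (q : ℝ) ^ (k - 1) * distNearestInt (ζ * q)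
        ≤ (q : ℝ) ^ e * (q : ℝ) ^ ((k - 1 : ℕ) : ℝ) * (q : ℝ) ^ (-w) := by
          rw [Real.rpow_natCast]
          gcongr
          exact distNearestInt_nonneg _
      _ = ((q ^ k : ℕ) : ℝ) ^ (-η) := by
          rw [← Real.rpow_add hq', ← Real.rpow_add hq', Nat.cast_pow, ← Real.rpow_natCast,
            ← Real.rpow_mul hq'.le, Nat.cast_sub hk]
          congr 1
          simp only [e]
          push_cast
          ring
  exact Nat.frequently_atTop_iff_infinite.1 ((tendsto_pow_atTop (by omega)).frequently hpow)

end Powers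

section Rigidity

lemma mul_eq_mul_of_abs_sub_le {α β x δ : ℝ} {p q r m : ℤ} (hm : (m : ℝ) = x)
    (hp : |α * x - p| ≤ δ) (hq : |β * x - q| ≤ δ) (hr : |α * β * x - r| ≤ δ)
    (hsmall : (|(p : ℝ)| + |β * x| + |x|) * δ < 1) : p * q = r * m := by
  have hid : ((p * q - r * m : ℤ) : ℝ) =
      p * (q - β * x) + β * x * (p - α * x) + (α * β * x - r) * x := by
    push_cast; rw [hm]; ring
  have h₁ : |p * (q - β * x)| ≤ |(p : ℝ)| * δ := by
    rw [abs_mul, abs_sub_comm]; exact mul_le_mul_of_nonneg_left hq (abs_nonneg _)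
  have h₂ : |β * x * (p - α * x)| ≤ |β * x| * δ := by
    rw [abs_mul, abs_sub_comm]; exact mul_le_mul_of_nonneg_left hp (abs_nonneg _)
  have h₃ : |(α * β * x - r) * x| ≤ |x| * δ := by
    rw [abs_mul, mul_comm]; exact mul_le_mul_of_nonneg_left hr (abs_nonneg _)
  have hlt : |((p * q - r * m : ℤ) : ℝ)| < 1 := by
    rw [hid]
    linarith [abs_add_three (p * (q - β * x)) (β * x * (p - α * x)) ((α * β * x - r) * x)]
  have := Int.abs_lt_one_iff.1 (by exact_mod_cast hlt)
  linarith

lemma pow_succ_eq_mul_pow_of_mul_eq {R : Type*} [CommMonoid R] {p : ℕ → R} {x : R} {n : ℕ}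
    (h : ∀ j < n, p 0 * p j = p (j + 1) * x) : p 0 ^ (n + 1) = p n * x ^ n := by
  induction n with
  | zero => simp
  | succ n ih =>
    calc p 0 ^ (n + 1 + 1) = p 0 * p n * x ^ n := by
          rw [pow_succ, ih fun j hj => h j (by omega)]; ac_rfl
      _ = p (n + 1) * x ^ (n + 1) := by rw [h n n.lt_succ_self, pow_succ']; ac_rfl

lemma exists_pow_succ_le_of_dvd_pow {a : ℤ} {x n : ℕ} (hx : 0 < x)
    (h : (x : ℤ) ^ n ∣ a ^ (n + 1)) :
    ∃ (b : ℕ) (c : ℤ), 0 < b ∧ b ^ (n + 1) ≤ x ∧ c * x = a * b := by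
  obtain ⟨g, c, b, hg, hcop, rfl, hxb⟩ :=
    Int.exists_gcd_one' (Int.gcd_pos_of_ne_zero_right a (by positivity : (x : ℤ) ≠ 0))
  have hb : 0 < b := pos_of_mul_pos_left (hxb ▸ (by positivity : (0 : ℤ) < x)) (by positivity)
  lift b to ℕ using hb.le
  have hbg : b ^ n ∣ g := by
    have h' : (b : ℤ) ^ n * g ^ n ∣ c ^ (n + 1) * g * g ^ n := by
      rw [← mul_pow, ← hxb]; convert h using 1; ring
    have h'' := (mul_dvd_mul_iff_right (pow_ne_zero n (by positivity : (g : ℤ) ≠ 0))).1 h'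
    exact Int.natCast_dvd_natCast.1 (by
      exact_mod_cast (Int.isCoprime_iff_gcd_eq_one.2 hcop).symm.pow.dvd_of_dvd_mul_left h'')
  refine ⟨b, c, by exact_mod_cast hb, ?_, by rw [hxb]; ring⟩
  have hx' : x = b * g := by exact_mod_cast hxb
  rw [pow_succ', hx']
  exact Nat.mul_le_mul_left b (Nat.le_of_dvd hg hbg)

lemma exists_distNearestInt_le_of_maxDist_lt {k x : ℕ} {ζ : ℝ} (hk : 1 ≤ k) (hx : 0 < x)
    (hsmall : (2 * (|ζ| + 1) ^ k + 2) * x * maxDist k ζ x < 1) :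
    ∃ b : ℕ, 0 < b ∧ b ^ k ≤ x ∧ distNearestInt (ζ * b) ≤ b / x * maxDist k ζ x := by
  obtain ⟨n, rfl⟩ : ∃ n, k = n + 1 := ⟨k - 1, by omega⟩
  set δ := maxDist (n + 1) ζ x
  set C := |ζ| + 1
  set p : ℕ → ℤ := fun j => round (ζ ^ (j + 1) * x)
  have hx1 : (1 : ℝ) ≤ x := by exact_mod_cast hx
  have hδ : 0 ≤ δ := (distNearestInt_nonneg _).trans (distNearestInt_le_maxDist hk ζ x)
  have hpδ : ∀ j ≤ n, |ζ ^ (j + 1) * x - p j| ≤ δ := fun j hj =>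
    le_maxDist (by omega) (by omega) ζ x
  have hζx : ∀ j ≤ n, |ζ ^ (j + 1) * (x : ℝ)| ≤ C ^ (n + 1) * x := by
    intro j hj
    rw [abs_mul, abs_pow, Nat.abs_cast]
    gcongr
    calc |ζ| ^ (j + 1) ≤ C ^ (j + 1) := by gcongr; simp [C]
      _ ≤ C ^ (n + 1) := pow_le_pow_right₀ (by simp [C]) (by omega)
  have hp0 : |(p 0 : ℝ)| ≤ C ^ (n + 1) * x + x := by
    have := abs_sub_abs_le_abs_sub (p 0 : ℝ) (ζ ^ (0 + 1) * x)
    rw [abs_sub_comm] at this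
    linarith [abs_sub_round (ζ ^ (0 + 1) * x), hζx 0 (Nat.zero_le n)]
  have hrec : ∀ j < n, p 0 * p j = p (j + 1) * x := by
    intro j hj
    refine mul_eq_mul_of_abs_sub_le (α := ζ) (Int.cast_natCast x) ?_ (hpδ j hj.le) ?_ ?_
    · simpa only [zero_add, pow_one] using hpδ 0 (Nat.zero_le n)
    · simpa only [← pow_succ'] using hpδ (j + 1) hj
    · refine lt_of_le_of_lt ?_ hsmall
      have := hζx j hj.le
      rw [Nat.abs_cast]
      gcongr
      linarith
  have hdvd : (x : ℤ) ^ n ∣ p 0 ^ (n + 1) :=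
    Dvd.intro_left _ (pow_succ_eq_mul_pow_of_mul_eq hrec).symm
  obtain ⟨b, c, hb, hbx, hcb⟩ := exists_pow_succ_le_of_dvd_pow hx hdvd
  have hx0 : (x : ℝ) ≠ 0 := by positivity
  have hcb' : (c : ℝ) = p 0 * b / x := by
    rw [eq_div_iff hx0]; exact_mod_cast hcb
  refine ⟨b, hb, hbx, (distNearestInt_le_abs_sub _ c).trans ?_⟩
  calc |ζ * b - c| = b / x * |ζ ^ (0 + 1) * x - p 0| := by
        rw [hcb', ← abs_of_nonneg (by positivity : (0 : ℝ) ≤ b / x), ← abs_mul]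
        congr 1
        field_simp
        ring
    _ ≤ b / x * δ := by gcongr; exact hpδ 0 (Nat.zero_le n)

lemma div_mul_rpow_neg_le_rpow {b x s : ℝ} {k : ℕ} (hb : 0 < b) (hbx : b ^ k ≤ x) (hs : -1 ≤ s) :
    b / x * x ^ (-s) ≤ b ^ (-(k * s + k - 1)) := by
  have hx : 0 < x := (pow_pos hb k).trans_le hbx
  calc b / x * x ^ (-s) = b * x ^ (-(s + 1)) := by
        rw [neg_add, Real.rpow_add hx, Real.rpow_neg_one]; ring
    _ ≤ b * (b ^ k) ^ (-(s + 1)) := by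
        refine mul_le_mul_of_nonneg_left ?_ hb.le
        exact Real.rpow_le_rpow_of_nonpos (pow_pos hb k) hbx (by linarith)
    _ = b ^ (-(k * s + k - 1)) := by
        rw [← Real.rpow_natCast, ← Real.rpow_mul hb.le,
          show -(k * s + k - 1) = 1 + k * -(s + 1) by ring, Real.rpow_add hb, Real.rpow_one]

lemma infinite_approxSet_one_of_infinite_approxSet {k : ℕ} {ζ η : ℝ} (hζ : Irrational ζ)
    (hk : 1 ≤ k) (hη : 1 < η) (h : (approxSet k ζ η).Infinite) :
    (approxSet 1 ζ (k * η + k - 1)).Infinite := by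
  set E := 2 * (|ζ| + 1) ^ k + 2
  have hE : 0 < E := by positivity
  have hlim : ∀ s : ℝ, 0 < s → Tendsto (fun x : ℕ => (x : ℝ) ^ (-s)) atTop (𝓝 0) := fun s hs =>
    (tendsto_rpow_neg_atTop hs).comp tendsto_natCast_atTop_atTop
  refine infinite_of_forall_exists_distNearestInt_lt hζ fun ε hε => ?_
  have hev : ∀ᶠ x : ℕ in atTop, 0 < x ∧ (x : ℝ) ^ (-(η - 1)) < E⁻¹ ∧ (x : ℝ) ^ (-η) < ε :=
    (eventually_gt_atTop 0).and
      (((hlim _ (by linarith)).eventually (gt_mem_nhds (inv_pos.2 hE))).and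
        ((hlim _ (by linarith)).eventually (gt_mem_nhds hε)))
  obtain ⟨x, ⟨-, -, hxη⟩, hx, hxE, hxε⟩ :=
    ((Nat.frequently_atTop_iff_infinite.2 h).and_eventually hev).exists
  have hx' : (0 : ℝ) < x := by exact_mod_cast hx
  have hsmall : E * x * maxDist k ζ x < 1 := calc
    E * x * maxDist k ζ x ≤ E * (x * (x : ℝ) ^ (-η)) := by rw [mul_assoc]; gcongr
    _ = E * (x : ℝ) ^ (-(η - 1)) := by
      rw [show -(η - 1) = 1 + -η by ring, Real.rpow_add hx', Real.rpow_one]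
    _ < E * E⁻¹ := by gcongr
    _ = 1 := mul_inv_cancel₀ hE.ne'
  obtain ⟨b, hb, hbx, hbd⟩ := exists_distNearestInt_le_of_maxDist_lt hk hx hsmall
  have hbd' : distNearestInt (ζ * b) ≤ b / x * (x : ℝ) ^ (-η) := hbd.trans (by gcongr)
  have hbx' : (b : ℝ) ^ k ≤ x := by exact_mod_cast hbx
  have hb' : (b : ℝ) ≤ x := by exact_mod_cast (Nat.le_self_pow (by omega) b).trans hbx
  refine ⟨b, mem_approxSet_one.2 ⟨hb, distNearestInt_pos_of_irrational (hζ.mul_natCast hb.ne'),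
    hbd'.trans (div_mul_rpow_neg_le_rpow (by exact_mod_cast hb) hbx' (by linarith))⟩, hb, ?_⟩
  calc distNearestInt (ζ * b) ≤ b / x * (x : ℝ) ^ (-η) := hbd'
    _ ≤ 1 * (x : ℝ) ^ (-η) := by gcongr; exact div_le_one_of_le₀ hb' hx'.le
    _ < ε := by rwa [one_mul]

end Rigidity

lemma coe_sub_div_le_lambdaConst {k : ℕ} {ζ L : ℝ} (hζ : Irrational ζ) (hk : 1 ≤ k)
    (hL : (L : EReal) ≤ lambdaConst 1 ζ) : (((L - k + 1) / k : ℝ) : EReal) ≤ lambdaConst k ζ := by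
  have hk' : (1 : ℝ) ≤ k := by exact_mod_cast hk
  refine coe_le_lambdaConst_of_forall_lt fun η hη hηL => ?_
  rw [lt_div_iff₀ (by linarith)] at hηL
  obtain ⟨w, hw, hwL⟩ := exists_between (show k * η + k - 1 < L by linarith)
  have hw0 : 0 ≤ w := by nlinarith
  exact infinite_approxSet_pow hζ hk hw (infinite_approxSet_of_coe_lt_lambdaConst hw0
    ((EReal.coe_lt_coe_iff.2 hwL).trans_le hL))

lemma coe_one_div_le_lambdaConst {k : ℕ} {ζ : ℝ} (hζ : Irrational ζ) (hk : 1 ≤ k) :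
    ((1 / k : ℝ) : EReal) ≤ lambdaConst k ζ :=
  coe_le_lambdaConst (infinite_approxSet_one_div hζ hk)

lemma lambdaConst_le_max {k : ℕ} {ζ L : ℝ} (hζ : Irrational ζ) (hk : 1 ≤ k)
    (hL : lambdaConst 1 ζ ≤ L) : lambdaConst k ζ ≤ ((max 1 ((L - k + 1) / k) : ℝ) : EReal) := by
  have hk' : (0 : ℝ) < k := by exact_mod_cast hk
  refine lambdaConst_le (EReal.coe_nonneg.2 (zero_le_one.trans (le_max_left _ _)))
    fun η hη => EReal.coe_le_coe_iff.2 ?_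
  rcases le_or_gt η 1 with hη1 | hη1
  · exact hη1.trans (le_max_left _ _)
  · refine le_max_of_le_right ((le_div_iff₀ hk').2 ?_)
    have hkη := coe_le_lambdaConst (infinite_approxSet_one_of_infinite_approxSet hζ hk hη1 hη)
    linarith [EReal.coe_le_coe_iff.1 (hkη.trans hL)]

theorem stmt4 (ζ : ℝ) (hirr : Irrational ζ) (hfin : lambdaConst 1 ζ < ⊤)
    (k₀ : ℤ) (hk₀ : k₀ = ⌈((lambdaConst 1 ζ).toReal + 1) / 2⌉) :
    (∀ k : ℕ, 1 ≤ k → (k : ℤ) ≤ k₀ - 1 →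
      lambdaConst k ζ = ((((lambdaConst 1 ζ).toReal - k + 1) / k : ℝ) : EReal)) ∧
    (∀ k : ℕ, k₀ ≤ (k : ℤ) →
      ((max (((lambdaConst 1 ζ).toReal - k + 1) / k) (1 / k) : ℝ) : EReal) ≤ lambdaConst k ζ ∧
      lambdaConst k ζ ≤ 1) := by
  set L := (lambdaConst 1 ζ).toReal
  have hL : lambdaConst 1 ζ = L :=
    (EReal.coe_toReal hfin.ne (ne_bot_of_le_ne_bot EReal.zero_ne_bot (lambdaConst_nonneg 1 ζ))).symm
  have hL0 : 0 ≤ L := EReal.coe_nonneg.1 (hL ▸ lambdaConst_nonneg 1 ζ)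
  refine ⟨fun k hk hkk₀ => ?_, fun k hkk₀ => ?_⟩
  · have hk' : (0 : ℝ) < k := by exact_mod_cast hk
    have h2k : (k : ℝ) < (L + 1) / 2 := Int.lt_ceil.1 (by omega)
    have h1 : 1 ≤ (L - k + 1) / k := (le_div_iff₀ hk').2 (by linarith)
    refine le_antisymm ?_ (coe_sub_div_le_lambdaConst hirr hk hL.ge)
    simpa only [max_eq_right h1] using lambdaConst_le_max hirr hk hL.le
  · have hk : 1 ≤ k := by
      have := Int.ceil_pos.2 (show 0 < (L + 1) / 2 by linarith)
      omega
    have hk' : (0 : ℝ) < k := by exact_mod_cast hk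
    have h2k : (L + 1) / 2 ≤ k := Int.ceil_le.1 (by omega)
    have h1 : (L - k + 1) / k ≤ 1 := (div_le_one hk').2 (by linarith)
    constructor
    · rw [EReal.coe_strictMono.monotone.map_max]
      exact max_le (coe_sub_div_le_lambdaConst hirr hk hL.ge) (coe_one_div_le_lambdaConst hirr hk)
    · simpa only [max_eq_left h1, EReal.coe_one] using lambdaConst_le_max hirr hk hL.le
end

section
/- Let k ≥ 2 and b ≥ 2 be integers, ρ > 0 a real number, and let (a_n)_{n≥1} be a strictly increasing sequence of positive integers with lim_{n→∞} a_{n+1}/a_n = k(ρ+1). Let ζ = Σ_{n≥1} b^{−a_n}. Then for all pairs (x, y) ∈ ℤ² with x sufficiently large, the inequality |ζx − y| ≤ x^{−k/(k−1)} implies that (x, y) is an integral multiple of (b^{a_n}, Σ_{i≤n} b^{a_n − a_i}) for some n ≥ 1. -/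
/-!
Write `Q n = b ^ a n` and `P n = ∑ i ≤ n, b ^ (a n - a i)`. Then `ζ Q n = P n + Q n T n` with a
tail `T n ≤ 2 b ^ (-a (n + 1))`, and `P n ≡ 1 [ZMOD b]` is coprime to `Q n`. For integers `x, y`
the integer `x P n - y Q n = Q n (ζ x - y) - x Q n T n` vanishes once it is smaller than `1`, and
then `(x, y)` is a multiple of `(Q n, P n)`. Given `Q n ≤ x < Q (n + 1)`, this happens for the
index `n` when `x b ^ (a n + 2) ≤ b ^ a (n + 1)`, and for the index `n + 1` otherwise. The growth
`a (n + 1) ≥ k a n + 4 k`, which holds eventually since `a (n + 1) / a n → k (ρ + 1) > k`, is what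
makes `Q m |ζ x - y| ≤ Q m x ^ (-k / (k - 1)) ≤ 1 / 4` in both cases.
-/

open Filter Topology Finset

lemma Monotone.exists_le_lt_succ {α : Type*} [LinearOrder α] {f : ℕ → α} (hf : Monotone f)
    {x : α} {N : ℕ} (hN : f N ≤ x) (hx : ∃ m, x < f m) :
    ∃ n, N ≤ n ∧ f n ≤ x ∧ x < f (n + 1) := by
  by_contra! h
  have hle : ∀ n, N ≤ n → f n ≤ x := Nat.le_induction hN h
  obtain ⟨m, hm⟩ := hx
  rcases le_total N m with hNm | hmN
  · exact (hle m hNm).not_gt hm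
  · exact ((hf hmN).trans hN).not_gt hm

lemma eventually_mul_add_le_of_tendsto_div {u : ℕ → ℝ} {k L : ℝ} (hu : Tendsto u atTop atTop)
    (hlim : Tendsto (fun n => u (n + 1) / u n) atTop (𝓝 L)) (hkL : k < L) (C : ℝ) :
    ∀ᶠ n in atTop, k * u n + C ≤ u (n + 1) := by
  obtain ⟨δ, hδ, hkδ⟩ : ∃ δ, 0 < δ ∧ k + δ < L := ⟨(L - k) / 2, by linarith, by linarith⟩
  filter_upwards [hlim.eventually (eventually_ge_nhds hkδ),
    hu.eventually_gt_atTop 0, hu.eventually_ge_atTop (C / δ)] with n hratio hpos hlarge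
  rw [le_div_iff₀ hpos] at hratio
  rw [div_le_iff₀ hδ] at hlarge
  linarith

lemma pow_mul_rpow_neg_le_quarter {B x α : ℝ} {m p q : ℕ} (hB : 2 ≤ B) (hpq : B ^ p ≤ x * B ^ q)
    (hα : 0 ≤ α) (hm : m + 2 ≤ α * (p - q)) : B ^ m * x ^ (-α) ≤ 1 / 4 := by
  have hB0 : 0 < B := by linarith
  have hx : 0 < x := pos_of_mul_pos_left ((pow_pos hB0 p).trans_le hpq) (pow_pos hB0 q).le
  have hs : B ^ ((p : ℝ) - q) ≤ x := by
    rwa [Real.rpow_sub hB0, Real.rpow_natCast, Real.rpow_natCast, div_le_iff₀ (by positivity)]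
  have hpow : 4 * B ^ m ≤ x ^ α := calc
    4 * B ^ m ≤ B ^ 2 * B ^ m := by gcongr; nlinarith
    _ = B ^ ((m : ℝ) + 2) := by norm_cast; ring
    _ ≤ B ^ (α * (p - q)) := Real.rpow_le_rpow_of_exponent_le (by linarith) hm
    _ = (B ^ ((p : ℝ) - q)) ^ α := by rw [mul_comm, Real.rpow_mul hB0.le]
    _ ≤ x ^ α := by gcongr
  rw [Real.rpow_neg hx.le, ← div_eq_mul_inv, div_le_iff₀ (by positivity)]
  linarith

lemma IsCoprime.exists_eq_mul_of_mul_eq {R : Type*} [CommRing R] [IsDomain R] {q p x y : R}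
    (h : IsCoprime q p) (hq : q ≠ 0) (hxy : x * p = y * q) : ∃ c, x = c * q ∧ y = c * p := by
  obtain ⟨c, rfl⟩ := h.dvd_of_dvd_mul_right ⟨y, hxy.trans (mul_comm _ _)⟩
  exact ⟨c, mul_comm _ _, mul_left_cancel₀ hq (by linear_combination -hxy)⟩

noncomputable def lacunaryTail (B : ℝ) (a : ℕ → ℕ) (n : ℕ) : ℝ :=
  ∑' i, (B ^ a (i + (n + 1)))⁻¹

-- `lacunaryNum b a n / b ^ a n` is the partial sum `∑ i ≤ n, b ^ (-a i)`.
def lacunaryNum (b : ℕ) (a : ℕ → ℕ) (n : ℕ) : ℤ :=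
  ∑ i ∈ range (n + 1), (b : ℤ) ^ (a n - a i)

section Lacunary

variable {B : ℝ} {a : ℕ → ℕ}

lemma summable_inv_pow_comp (hB : 1 < B) (ha : StrictMono a) :
    Summable fun n => (B ^ a n)⁻¹ := by
  refine (summable_geometric_of_lt_one (by positivity) (inv_lt_one_of_one_lt₀ hB)).of_nonneg_of_le
    (fun n => by positivity) fun n => ?_
  rw [inv_pow]
  exact inv_anti₀ (by positivity) (pow_le_pow_right₀ hB.le (ha.id_le n))

lemma tsum_inv_pow_eq_sum_add_lacunaryTail (hB : 1 < B) (ha : StrictMono a) (n : ℕ) :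
    ∑' m, (B ^ a m)⁻¹ = ∑ m ∈ range (n + 1), (B ^ a m)⁻¹ + lacunaryTail B a n :=
  ((summable_inv_pow_comp hB ha).sum_add_tsum_nat_add (n + 1)).symm

lemma lacunaryTail_nonneg (hB : 0 ≤ B) (n : ℕ) : 0 ≤ lacunaryTail B a n :=
  tsum_nonneg fun _ => by positivity

lemma lacunaryTail_le (hB : 2 ≤ B) (ha : StrictMono a) (n : ℕ) :
    lacunaryTail B a n ≤ 2 * (B ^ a (n + 1))⁻¹ := by
  have hr0 : 0 ≤ B⁻¹ := by positivity
  have hr1 : B⁻¹ < 1 := inv_lt_one_of_one_lt₀ (by linarith)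
  calc lacunaryTail B a n ≤ ∑' i : ℕ, (B ^ a (n + 1))⁻¹ * B⁻¹ ^ i := by
        refine Summable.tsum_le_tsum (fun i => ?_)
          ((summable_nat_add_iff (f := fun m => (B ^ a m)⁻¹) (n + 1)).mpr
            (summable_inv_pow_comp (by linarith) ha))
          ((summable_geometric_of_lt_one hr0 hr1).mul_left _)
        rw [inv_pow, ← mul_inv, ← pow_add]
        have := ha.add_le_nat i (n + 1)
        exact inv_anti₀ (by positivity) (pow_le_pow_right₀ (by linarith) (by omega))
    _ = (1 - B⁻¹)⁻¹ * (B ^ a (n + 1))⁻¹ := by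
        rw [tsum_mul_left, tsum_geometric_of_lt_one hr0 hr1, mul_comm]
    _ ≤ 2 * (B ^ a (n + 1))⁻¹ := by
        gcongr
        rw [inv_le_comm₀ (by linarith) two_pos]
        linarith [inv_anti₀ two_pos hB]

lemma mul_pow_mul_lacunaryTail_le_half (hB : 2 ≤ B) (ha : StrictMono a) {x : ℝ} (hx : 0 ≤ x)
    {n : ℕ} (hgap : x * B ^ a n * B ^ 2 ≤ B ^ a (n + 1)) :
    x * (B ^ a n * lacunaryTail B a n) ≤ 1 / 2 := by
  have hQ : 0 < B ^ a (n + 1) := by positivity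
  have hxQ : 0 ≤ x * B ^ a n := mul_nonneg hx (by positivity)
  have hB2 : 4 ≤ B ^ 2 := by nlinarith
  calc x * (B ^ a n * lacunaryTail B a n) ≤ x * (B ^ a n * (2 * (B ^ a (n + 1))⁻¹)) := by
        gcongr; exact lacunaryTail_le hB ha n
    _ = 2 * (x * B ^ a n) / B ^ a (n + 1) := by ring
    _ ≤ 1 / 2 := by
        rw [div_le_iff₀ hQ]
        nlinarith [mul_le_mul_of_nonneg_left hB2 hxQ]

lemma lacunaryNum_cast {b : ℕ} (hb : b ≠ 0) (ha : Monotone a) (n : ℕ) :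
    (lacunaryNum b a n : ℝ) = (b : ℝ) ^ a n * ∑ i ∈ range (n + 1), ((b : ℝ) ^ a i)⁻¹ := by
  rw [lacunaryNum, mul_sum]
  push_cast
  refine sum_congr rfl fun i hi => ?_
  exact pow_sub₀ _ (by exact_mod_cast hb) (ha (Nat.lt_succ_iff.mp (mem_range.mp hi)))

-- `lacunaryNum b a n ≡ 1 [ZMOD b]`.
lemma isCoprime_pow_lacunaryNum {b : ℕ} (ha : StrictMono a) (n : ℕ) :
    IsCoprime ((b : ℤ) ^ a n) (lacunaryNum b a n) := by
  obtain ⟨s, hs⟩ : (b : ℤ) ∣ ∑ i ∈ range n, (b : ℤ) ^ (a n - a i) :=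
    dvd_sum fun i hi => dvd_pow_self _ (Nat.sub_ne_zero_of_lt (ha (mem_range.mp hi)))
  refine IsCoprime.pow_left ⟨-s, 1, ?_⟩
  rw [lacunaryNum, sum_range_succ, hs, Nat.sub_self, pow_zero]
  ring

lemma exists_eq_mul_of_defect_lt_one {b : ℕ} (hb : 2 ≤ b) (ha : StrictMono a) {x y : ℤ}
    (hx : 0 ≤ x) (n : ℕ)
    (h : x * ((b : ℝ) ^ a n * lacunaryTail b a n) +
      (b : ℝ) ^ a n * |(∑' m, ((b : ℝ) ^ a m)⁻¹) * x - y| < 1) :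
    ∃ c : ℤ, x = c * (b : ℤ) ^ a n ∧ y = c * lacunaryNum b a n := by
  have hB : (1 : ℝ) < b := by exact_mod_cast hb
  have hdefect : ((x * lacunaryNum b a n - y * (b : ℤ) ^ a n : ℤ) : ℝ) =
      (b : ℝ) ^ a n * ((∑' m, ((b : ℝ) ^ a m)⁻¹) * x - y) -
        x * ((b : ℝ) ^ a n * lacunaryTail b a n) := by
    rw [tsum_inv_pow_eq_sum_add_lacunaryTail hB ha n]
    push_cast
    rw [lacunaryNum_cast (by omega) ha.monotone]
    ring
  have hlt : |((x * lacunaryNum b a n - y * (b : ℤ) ^ a n : ℤ) : ℝ)| < 1 := by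
    have hT := lacunaryTail_nonneg (a := a) (by positivity : (0 : ℝ) ≤ b) n
    have hx' : (0 : ℝ) ≤ x := by exact_mod_cast hx
    rw [hdefect]
    refine (abs_sub _ _).trans_lt ?_
    rw [abs_mul, abs_of_pos (by positivity),
      abs_of_nonneg (by positivity : (0 : ℝ) ≤ x * ((b : ℝ) ^ a n * lacunaryTail b a n))]
    linarith
  refine (isCoprime_pow_lacunaryNum ha n).exists_eq_mul_of_mul_eq (by positivity) ?_
  exact sub_eq_zero.mp (Int.abs_lt_one_iff.mp (by exact_mod_cast hlt))

lemma exists_eq_mul_of_abs_sub_le_rpow_neg {b : ℕ} (hb : 2 ≤ b) (ha : StrictMono a)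
    {x y : ℤ} {n p q : ℕ} {α : ℝ} (hα : 0 ≤ α) (hpq : (b : ℝ) ^ p ≤ x * (b : ℝ) ^ q)
    (hexp : a n + 2 ≤ α * (p - q))
    (hgap : x * (b : ℝ) ^ a n * (b : ℝ) ^ 2 ≤ (b : ℝ) ^ a (n + 1))
    (happrox : |(∑' m, ((b : ℝ) ^ a m)⁻¹) * x - y| ≤ (x : ℝ) ^ (-α)) :
    ∃ c : ℤ, x = c * (b : ℤ) ^ a n ∧ y = c * lacunaryNum b a n := by
  have hB : (2 : ℝ) ≤ b := by exact_mod_cast hb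
  have hx : (0 : ℝ) < x := pos_of_mul_pos_left ((pow_pos (by positivity) p).trans_le hpq)
    (pow_pos (by positivity) q).le
  refine exists_eq_mul_of_defect_lt_one hb ha (by exact_mod_cast hx.le) n ?_
  have htail := mul_pow_mul_lacunaryTail_le_half hB ha hx.le hgap
  have happ : (b : ℝ) ^ a n * |(∑' m, ((b : ℝ) ^ a m)⁻¹) * x - y| ≤ 1 / 4 :=
    (mul_le_mul_of_nonneg_left happrox (by positivity)).trans
      (pow_mul_rpow_neg_le_quarter hB hpq hα hexp)
  linarith

lemma exists_eq_mul_of_pow_le_of_lt_pow {b : ℕ} {k : ℝ} (hk : 2 ≤ k) (hb : 2 ≤ b)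
    (ha : StrictMono a) {x y : ℤ} {n : ℕ} (hlo : (b : ℝ) ^ a n ≤ x) (hhi : x < (b : ℝ) ^ a (n + 1))
    (han : 2 * k ≤ a n) (hgrowth : k * a n + 4 * k ≤ a (n + 1))
    (hgrowth' : k * a (n + 1) + 4 * k ≤ a (n + 1 + 1))
    (happrox : |(∑' m, ((b : ℝ) ^ a m)⁻¹) * x - y| ≤ (x : ℝ) ^ (-(k / (k - 1)))) :
    ∃ (m : ℕ) (c : ℤ), x = c * (b : ℤ) ^ a m ∧ y = c * lacunaryNum b a m := by
  have hB : (1 : ℝ) < b := by exact_mod_cast hb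
  have hα : 0 ≤ k / (k - 1) := div_nonneg (by linarith) (by linarith)
  by_cases hgap : x * (b : ℝ) ^ a n * (b : ℝ) ^ 2 ≤ (b : ℝ) ^ a (n + 1)
  · refine ⟨n, exists_eq_mul_of_abs_sub_le_rpow_neg hb ha hα (q := 0) (by simpa using hlo) ?_
      hgap happrox⟩
    rw [div_mul_eq_mul_div, le_div_iff₀ (by linarith)]
    push_cast
    nlinarith
  · -- `b ^ a (n + 1) < x * b ^ (a n + 2)`: now `x` is large enough for the index `n + 1`.
    refine ⟨n + 1, exists_eq_mul_of_abs_sub_le_rpow_neg hb ha hα (p := a (n + 1)) (q := a n + 2)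
      ?_ ?_ ?_ happrox⟩
    · rw [pow_add, ← mul_assoc]
      exact (not_le.mp hgap).le
    · rw [div_mul_eq_mul_div, le_div_iff₀ (by linarith)]
      push_cast
      nlinarith
    · calc x * (b : ℝ) ^ a (n + 1) * (b : ℝ) ^ 2
          ≤ (b : ℝ) ^ a (n + 1) * (b : ℝ) ^ a (n + 1) * (b : ℝ) ^ 2 := by gcongr
        _ = (b : ℝ) ^ (a (n + 1) + a (n + 1) + 2) := by ring
        _ ≤ (b : ℝ) ^ a (n + 1 + 1) := by
          refine pow_le_pow_right₀ hB.le ?_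
          have : (a (n + 1) + a (n + 1) + 2 : ℝ) ≤ a (n + 1 + 1) := by nlinarith
          exact_mod_cast this

end Lacunary

theorem stmt12_general (k b : ℕ) (hk : 2 ≤ k) (hb : 2 ≤ b) (ρ : ℝ) (hρ : 0 < ρ)
    (a : ℕ → ℕ) (ha : StrictMono a)
    (hlim : Filter.Tendsto (fun n => (a (n + 1) : ℝ) / (a n : ℝ)) Filter.atTop
      (nhds ((k : ℝ) * (ρ + 1))))
    (ζ : ℝ) (hζ : ζ = ∑' n : ℕ, ((b : ℝ) ^ (a n))⁻¹) :
    ∃ X : ℤ, ∀ x y : ℤ, X ≤ x →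
      |ζ * x - y| ≤ (x : ℝ) ^ (-(k : ℝ) / ((k : ℝ) - 1)) →
      ∃ (n : ℕ) (c : ℤ), x = c * (b : ℤ) ^ (a n) ∧
        y = c * ∑ i ∈ Finset.range (n + 1), (b : ℤ) ^ (a n - a i) := by
  subst hζ
  have hk' : (2 : ℝ) ≤ k := by exact_mod_cast hk
  have hB : (1 : ℝ) < b := by exact_mod_cast hb
  have hu : Tendsto (fun n => (a n : ℝ)) atTop atTop :=
    tendsto_natCast_atTop_atTop.comp ha.tendsto_atTop
  obtain ⟨N, hN⟩ := eventually_atTop.mp ((hu.eventually_ge_atTop (2 * k)).and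
    (eventually_mul_add_le_of_tendsto_div (k := k) hu hlim (by nlinarith) (4 * k)))
  refine ⟨(b : ℤ) ^ a N, fun x y hxN happrox => ?_⟩
  have hmono : Monotone fun m => (b : ℝ) ^ a m := (pow_right_mono₀ hB.le).comp ha.monotone
  have hunbdd : ∃ m, (x : ℝ) < (b : ℝ) ^ a m :=
    (((tendsto_pow_atTop_atTop_of_one_lt hB).comp ha.tendsto_atTop).eventually_gt_atTop _).exists
  obtain ⟨n, hNn, hlo, hhi⟩ :=
    hmono.exists_le_lt_succ (show (b : ℝ) ^ a N ≤ x by exact_mod_cast hxN) hunbdd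
  rw [neg_div] at happrox
  exact exists_eq_mul_of_pow_le_of_lt_pow hk' hb ha hlo hhi (hN n hNn).1 (hN n hNn).2
    (hN (n + 1) (by omega)).2 happrox

theorem stmt12 (k b : ℕ) (hk : 2 ≤ k) (hb : 2 ≤ b) (ρ : ℝ) (hρ : 0 < ρ)
    (a : ℕ → ℕ) (ha : StrictMono a) (hapos : ∀ n, 0 < a n)
    (hlim : Filter.Tendsto (fun n => (a (n + 1) : ℝ) / (a n : ℝ)) Filter.atTop
      (nhds ((k : ℝ) * (ρ + 1))))
    (ζ : ℝ) (hζ : ζ = ∑' n : ℕ, ((b : ℝ) ^ (a n))⁻¹) :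
    ∃ X : ℤ, ∀ x y : ℤ, X ≤ x →
      |ζ * x - y| ≤ (x : ℝ) ^ (-(k : ℝ) / ((k : ℝ) - 1)) →
      ∃ (n : ℕ) (c : ℤ), x = c * (b : ℤ) ^ (a n) ∧
        y = c * ∑ i ∈ Finset.range (n + 1), (b : ℤ) ^ (a n - a i) :=
  stmt12_general k b hk hb ρ hρ a ha hlim ζ hζ
end
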